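/- For any integer n ≥ 2, the equidistant dimension of the squared grid graph P_n □ P_n equals ⌈n²/2⌉. -/

import Mathlib

/-!
Colour the vertex `(i, j)` of the grid by the parity of `i + j`. Distances in the grid are
`|i - k| + |j - r|`, so their parity is the sum of the colours of the endpoints, and two
vertices of different colours are never equidistant from a third one. Hence the complement of
a distance-equalizer set is monochromatic: the set contains a whole colour class. For odd `n`
the odd class is not enough, because only vertices on the antidiagonal `w₁ + w₂ = n - 1`, all of
them even, equalize the even corners `(0, 0)` and `(n - 1, n - 1)`. So every equalizer has at
least `⌈n² / 2⌉` elements, the size of the even class. Conversely the even class is itself an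
equalizer: the L¹ bisector of two odd vertices always meets an even vertex of the grid.
-/

open SimpleGraph

/-- A distance-equalizer set: any two vertices outside `D` are equidistant
from some vertex of `D`. -/
def IsDistEqSet {V : Type*} (G : SimpleGraph V) (D : Set V) : Prop :=
  ∀ x ∉ D, ∀ y ∉ D, ∃ w ∈ D, G.dist x w = G.dist y w

/-- The equidistant dimension: minimum cardinality of a distance-equalizer set. -/
noncomputable def eqdim {V : Type*} [Fintype V] (G : SimpleGraph V) : ℕ :=
  sInf {k | ∃ D : Finset V, IsDistEqSet G (D : Set V) ∧ D.card = k}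

open Finset

namespace SimpleGraph

variable {V W : Type*} {G : SimpleGraph V} {H : SimpleGraph W}

lemma dist_boxProd (hG : G.Preconnected) (hH : H.Preconnected) (x y : V × W) :
    (G □ H).dist x y = G.dist x.1 y.1 + H.dist x.2 y.2 := by
  have h := edist_boxProd (G := G) (H := H) x y
  rw [← (hG.boxProd hH x y).coe_dist_eq_edist, ← (hG x.1 y.1).coe_dist_eq_edist,
    ← (hH x.2 y.2).coe_dist_eq_edist] at h
  exact_mod_cast h

lemma Walk.natDist_le_length {n : ℕ} {i j : Fin n} (p : (pathGraph n).Walk i j) :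
    Nat.dist i j ≤ p.length := by
  induction p with
  | nil => simp
  | cons h _ ih =>
    rw [pathGraph_adj] at h
    simp only [Nat.dist, Walk.length_cons] at *
    omega

lemma pathGraph_dist_le_natDist {n : ℕ} (i j : Fin n) :
    (pathGraph n).dist i j ≤ Nat.dist i j := by
  wlog hij : i ≤ j generalizing i j
  · rw [dist_comm, Nat.dist_comm]
    exact this j i (le_of_not_ge hij)
  obtain ⟨k, hk⟩ := Nat.exists_eq_add_of_le hij
  induction k generalizing j with
  | zero => simp [Fin.ext hk.symm]
  | succ k ih =>
    set j' : Fin n := ⟨i + k, by omega⟩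
    have hadj : (pathGraph n).Adj j' j := pathGraph_adj.mpr (.inl (by simp [j', hk]; omega))
    calc (pathGraph n).dist i j ≤ (pathGraph n).dist i j' + (pathGraph n).dist j' j :=
          (pathGraph_preconnected n i j').dist_triangle_left j
      _ ≤ Nat.dist i j' + 1 := add_le_add (ih j' (Fin.le_def.mpr (by simp [j'])) rfl)
          (dist_eq_one_iff_adj.mpr hadj).le
      _ = Nat.dist i j := by simp only [Nat.dist, j']; omega

lemma pathGraph_dist {n : ℕ} (i j : Fin n) : (pathGraph n).dist i j = Nat.dist i j := by
  refine (pathGraph_dist_le_natDist i j).antisymm ?_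
  obtain ⟨p, hp⟩ := (pathGraph_preconnected n i j).exists_walk_length_eq_dist
  exact hp ▸ p.natDist_le_length

end SimpleGraph

lemma eqdim_eq {V : Type*} [Fintype V] {G : SimpleGraph V} {D : Finset V}
    (hD : IsDistEqSet G D) (hmin : ∀ D' : Finset V, IsDistEqSet G D' → #D ≤ #D') :
    eqdim G = #D :=
  le_antisymm (Nat.sInf_le ⟨D, hD, rfl⟩)
    (le_csInf ⟨_, D, hD, rfl⟩ fun _ ⟨D', hD', hk⟩ ↦ hk ▸ hmin D' hD')

lemma IsDistEqSet.mod_two_eq_of_notMem {V : Type*} {G : SimpleGraph V} {D : Set V}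
    (hD : IsDistEqSet G D) {f : V → ℕ} (hf : ∀ u v, G.dist u v % 2 = (f u + f v) % 2)
    {x y : V} (hx : x ∉ D) (hy : y ∉ D) : f x % 2 = f y % 2 := by
  obtain ⟨w, -, hw⟩ := hD x hx y hy
  have := hf x w
  have := hf y w
  omega

/- For `x₁ ≤ y₁` and `|x₂ - y₂| ≤ y₁ - x₁`, with `2 s = y₁ - x₁ + |x₂ - y₂|`, the L¹ bisector
of `x` and `y` contains the vertical rays leaving `(x₁ + s, x₂)` away from `y₂` and leaving
`(x₁ + s - |x₂ - y₂|, y₂)` away from `x₂`, and the segment joining these two points, on which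
`w₁ + w₂` has constant parity. The parity changes along a ray, and one of the rays has a second
point in the grid unless `x = (0, 0)`, which is even, or `x = (0, n - 1)` and `y = (n - 1, 0)`,
where `(0, 0)` is equidistant from both. -/
lemma exists_even_equidistant_of_le {n x₁ x₂ y₁ y₂ : ℕ} (hx₁ : x₁ < n) (hx₂ : x₂ < n)
    (hy₁ : y₁ < n) (hy₂ : y₂ < n) (hx : Odd (x₁ + x₂)) (hy : Odd (y₁ + y₂)) (h₁ : x₁ ≤ y₁)
    (hdom : x₂.dist y₂ ≤ y₁ - x₁) :
    ∃ w₁ < n, ∃ w₂ < n, Even (w₁ + w₂) ∧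
      x₁.dist w₁ + x₂.dist w₂ = y₁.dist w₁ + y₂.dist w₂ := by
  simp only [Nat.odd_iff, Nat.even_iff, Nat.dist] at *
  obtain ⟨s, hs⟩ : ∃ s, y₁ - x₁ + (x₂ - y₂ + (y₂ - x₂)) = 2 * s :=
    ⟨(y₁ - x₁ + (x₂ - y₂ + (y₂ - x₂))) / 2, by omega⟩
  by_cases hpar : (x₁ + s + x₂) % 2 = 0
  · exact ⟨x₁ + s, by omega, x₂, hx₂, hpar, by omega⟩
  rcases le_or_gt x₂ y₂ with h₂ | h₂
  · by_cases hbot : 1 ≤ x₂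
    · exact ⟨x₁ + s, by omega, x₂ - 1, by omega, by omega, by omega⟩
    · exact ⟨x₁ + s - (y₂ - x₂), by omega, y₂ + 1, by omega, by omega, by omega⟩
  · by_cases htop : x₂ + 1 < n
    · exact ⟨x₁ + s, by omega, x₂ + 1, htop, by omega, by omega⟩
    by_cases hbot : 1 ≤ y₂
    · exact ⟨x₁ + s - (x₂ - y₂), by omega, y₂ - 1, by omega, by omega, by omega⟩
    · exact ⟨0, by omega, 0, by omega, by omega, by omega⟩

lemma exists_even_equidistant {n x₁ x₂ y₁ y₂ : ℕ} (hx₁ : x₁ < n) (hx₂ : x₂ < n)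
    (hy₁ : y₁ < n) (hy₂ : y₂ < n) (hx : Odd (x₁ + x₂)) (hy : Odd (y₁ + y₂)) :
    ∃ w₁ < n, ∃ w₂ < n, Even (w₁ + w₂) ∧
      x₁.dist w₁ + x₂.dist w₂ = y₁.dist w₁ + y₂.dist w₂ := by
  wlog hdom : x₂.dist y₂ ≤ x₁.dist y₁ generalizing x₁ x₂ y₁ y₂
  · obtain ⟨w₁, hw₁, w₂, hw₂, hw, heq⟩ :=
      this hx₂ hx₁ hy₂ hy₁ (add_comm x₁ x₂ ▸ hx) (add_comm y₁ y₂ ▸ hy) (le_of_not_ge hdom)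
    exact ⟨w₂, hw₂, w₁, hw₁, add_comm w₁ w₂ ▸ hw, by omega⟩
  rcases le_total x₁ y₁ with h₁ | h₁
  · exact exists_even_equidistant_of_le hx₁ hx₂ hy₁ hy₂ hx hy h₁
      (Nat.dist_eq_sub_of_le h₁ ▸ hdom)
  · obtain ⟨w₁, hw₁, w₂, hw₂, hw, heq⟩ := exists_even_equidistant_of_le hy₁ hy₂ hx₁ hx₂ hy hx h₁
      (by rwa [Nat.dist_comm, ← Nat.dist_eq_sub_of_le_right h₁])
    exact ⟨w₁, hw₁, w₂, hw₂, hw, heq.symm⟩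

abbrev gridGraph (n : ℕ) : SimpleGraph (Fin n × Fin n) := pathGraph n □ pathGraph n

def evenCells (n : ℕ) : Finset (Fin n × Fin n) := {v | Even (v.1.val + v.2.val)}

lemma card_evenCells_sub_card_compl (n : ℕ) :
    (#(evenCells n) : ℤ) - #(evenCells n)ᶜ = if Even n then 0 else 1 := by
  have hsign : ∑ v : Fin n × Fin n, (-1 : ℤ) ^ (v.1.val + v.2.val)
      = #(evenCells n) - #(evenCells n)ᶜ := by
    simp only [neg_one_pow_eq_ite, Finset.sum_ite, sum_const, evenCells, compl_filter,
      Int.nsmul_eq_mul, mul_one, Nat.not_even_iff_odd, mul_neg, sub_eq_add_neg]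
  have hsq : ∑ v : Fin n × Fin n, (-1 : ℤ) ^ (v.1.val + v.2.val)
      = (∑ i ∈ range n, (-1 : ℤ) ^ i) ^ 2 := by
    rw [← Fin.sum_univ_eq_sum_range, sq, Finset.sum_mul_sum, Fintype.sum_prod_type]
    simp only [pow_add]
  rw [← hsign, hsq, neg_one_geom_sum]
  split_ifs <;> norm_num

lemma card_evenCells (n : ℕ) : #(evenCells n) = (n ^ 2 + 1) / 2 := by
  have hsum := card_add_card_compl (evenCells n)
  have hdiff := card_evenCells_sub_card_compl n
  rw [Fintype.card_prod, Fintype.card_fin, ← sq] at hsum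
  rcases Nat.even_or_odd n with hn | hn
  · have := Nat.even_iff.mp ((Nat.even_pow' two_ne_zero).mpr hn)
    rw [if_pos hn] at hdiff
    omega
  · have := Nat.odd_iff.mp (hn.pow (n := 2))
    rw [if_neg (Nat.not_even_iff_odd.mpr hn)] at hdiff
    omega

lemma gridGraph_dist {n : ℕ} (u v : Fin n × Fin n) :
    (gridGraph n).dist u v = Nat.dist u.1 v.1 + Nat.dist u.2 v.2 := by
  rw [dist_boxProd (pathGraph_preconnected n) (pathGraph_preconnected n), pathGraph_dist,
    pathGraph_dist]

lemma gridGraph_dist_mod_two {n : ℕ} (u v : Fin n × Fin n) :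
    (gridGraph n).dist u v % 2 = (u.1.val + u.2.val + (v.1.val + v.2.val)) % 2 := by
  rw [gridGraph_dist]
  simp only [Nat.dist]
  omega

lemma isDistEqSet_evenCells (n : ℕ) : IsDistEqSet (gridGraph n) (evenCells n) := by
  intro x hx y hy
  simp only [evenCells, coe_filter, mem_univ, true_and, Set.mem_ofPred_eq,
    Nat.not_even_iff_odd] at hx hy
  obtain ⟨w₁, hw₁, w₂, hw₂, hw, heq⟩ := exists_even_equidistant x.1.2 x.2.2 y.1.2 y.2.2 hx hy
  exact ⟨(⟨w₁, hw₁⟩, ⟨w₂, hw₂⟩), by simpa [evenCells] using hw, by simpa [gridGraph_dist] using heq⟩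

lemma IsDistEqSet.evenCells_subset_or_compl_subset {n : ℕ} {D : Finset (Fin n × Fin n)}
    (hD : IsDistEqSet (gridGraph n) D) : evenCells n ⊆ D ∨ (evenCells n)ᶜ ⊆ D := by
  by_contra! h
  obtain ⟨e, he, heD⟩ := not_subset.mp h.1
  obtain ⟨o, ho, hoD⟩ := not_subset.mp h.2
  have := hD.mod_two_eq_of_notMem gridGraph_dist_mod_two (mem_coe.not.mpr heD)
    (mem_coe.not.mpr hoD)
  simp only [evenCells, Nat.even_iff, mem_filter, mem_univ, true_and, compl_filter,
    Nat.mod_two_not_eq_zero] at he ho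
  omega

lemma IsDistEqSet.exists_mem_evenCells {n : ℕ} (hn : Odd n) {D : Finset (Fin n × Fin n)}
    (hD : IsDistEqSet (gridGraph n) D) : ∃ v ∈ D, v ∈ evenCells n := by
  obtain ⟨k, rfl⟩ := hn
  set c₀ : Fin (2 * k + 1) × Fin (2 * k + 1) := (0, 0)
  set c₁ : Fin (2 * k + 1) × Fin (2 * k + 1) := (Fin.last _, Fin.last _)
  by_cases h₀ : c₀ ∈ D
  · exact ⟨c₀, h₀, by simp [evenCells, c₀]⟩
  by_cases h₁ : c₁ ∈ D
  · exact ⟨c₁, h₁, by simp [evenCells, c₁]⟩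
  obtain ⟨w, hwD, hw⟩ := hD c₀ (by simpa) c₁ (by simpa)
  refine ⟨w, hwD, ?_⟩
  rw [gridGraph_dist, gridGraph_dist] at hw
  have := w.1.2
  have := w.2.2
  simp only [Nat.dist, Fin.coe_ofNat_eq_mod, Nat.zero_mod, zero_tsub, tsub_zero, zero_add,
    Fin.val_last, evenCells, Nat.even_iff, mem_filter, mem_univ, true_and, c₀, c₁] at hw ⊢
  omega

lemma IsDistEqSet.card_evenCells_le {n : ℕ} {D : Finset (Fin n × Fin n)}
    (hD : IsDistEqSet (gridGraph n) D) : #(evenCells n) ≤ #D := by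
  have hdiff := card_evenCells_sub_card_compl n
  rcases hD.evenCells_subset_or_compl_subset with h | h
  · exact card_le_card h
  split_ifs at hdiff with hn
  · have := card_le_card h
    omega
  · obtain ⟨v, hvD, hv⟩ := hD.exists_mem_evenCells (Nat.not_even_iff_odd.mp hn)
    have := card_le_card (insert_subset hvD h)
    rw [card_insert_of_notMem (by simpa using hv)] at this
    omega

theorem stmt_18_general (n : ℕ) :
    eqdim (pathGraph n □ pathGraph n) = (n ^ 2 + 1) / 2 := by
  rw [← card_evenCells n]
  exact eqdim_eq (isDistEqSet_evenCells n) fun _ hD ↦ hD.card_evenCells_le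

theorem stmt_18 (n : ℕ) (hn : 2 ≤ n) :
    eqdim (pathGraph n □ pathGraph n) = (n ^ 2 + 1) / 2 :=
  stmt_18_general n
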